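/- arXiv:2007.14597 — 2 statements merged into one kernel-verified Lean document; each statement's English description precedes it below -/
import Mathlib

section
/- For every nonnegative integer k, ∫_{-∞}^{∞} e^{-z²/2} H_{2k}(z) dz = 2^{2k+1/2} Γ(k + 1/2), and ∫_{-∞}^{∞} e^{-z²/2} H_{2k+1}(z) dz = 0. -/
open MeasureTheory

/-- The physicists' Hermite polynomials (as real functions), defined by `H_0 = 1` and
`H_{j+1}(x) = 2x H_j(x) - H_j'(x)`. -/
noncomputable def physHermite : ℕ → ℝ → ℝ
  | 0 => fun _ => 1
  | n + 1 => fun x => 2 * x * physHermite n x - deriv (physHermite n) x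

open Polynomial in
/-- Polynomial version of the physicists' Hermite polynomials. -/
noncomputable def PH : ℕ → Polynomial ℝ
  | 0 => 1
  | n + 1 => C 2 * X * PH n - derivative (PH n)

open Polynomial

lemma physHermite_eval (n : ℕ) : physHermite n = fun x => (PH n).eval x := by
  induction n with
  | zero => funext x; simp [physHermite, PH]
  | succ n ih =>
    funext x
    simp only [physHermite, PH, ih, Polynomial.deriv]
    simp [Polynomial.eval_sub, Polynomial.eval_mul]

lemma PH_derivative (n : ℕ) : derivative (PH (n + 1)) = C (2 * (n + 1) : ℝ) * PH n := by
  induction n with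
  | zero =>
    rw [show PH 1 = C 2 * X * PH 0 - derivative (PH 0) from rfl,
      show PH 0 = 1 from rfl]
    simp
  | succ n ih =>
    have hdef : PH (n+2) = C 2 * X * PH (n+1) - derivative (PH (n+1)) := rfl
    have hdef1 : PH (n+1) = C 2 * X * PH n - derivative (PH n) := rfl
    rw [hdef, derivative_sub, derivative_mul, derivative_mul, ih, derivative_mul]
    rw [hdef1]
    simp only [derivative_C, derivative_X, derivative_one]
    push_cast
    simp only [map_add, map_mul, map_ofNat, Polynomial.C_1]
    ring

lemma integrable_poly_gauss (P : Polynomial ℝ) :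
    Integrable fun z : ℝ => Real.exp (-z^2/2) * P.eval z := by
  induction P using Polynomial.induction_on' with
  | add p q hp hq => simp only [mul_add, eval_add]; exact hp.add hq
  | monomial n a =>
    have h : Integrable fun x : ℝ => x ^ (n : ℝ) * Real.exp (-(1/2) * x ^ 2) :=
      integrable_rpow_mul_exp_neg_mul_sq (by norm_num)
        (lt_of_lt_of_le (by norm_num) (Nat.cast_nonneg n))
    simp_rw [Real.rpow_natCast] at h
    have heq : (fun z : ℝ => Real.exp (-z^2/2) * (Polynomial.monomial n a).eval z)
        = fun z : ℝ => a * (z ^ n * Real.exp (-(1/2) * z ^ 2)) := by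
      funext z
      rw [show -z^2/2 = -(1/2)*z^2 by ring]
      simp [Polynomial.eval_monomial]; ring
    rw [heq]
    exact h.const_mul a

lemma hasDerivAt_gauss_poly (P : Polynomial ℝ) (z : ℝ) :
    HasDerivAt (fun z : ℝ => Real.exp (-z^2/2) * P.eval z)
      (Real.exp (-z^2/2) * ((derivative P - X * P).eval z)) z := by
  have h0 : HasDerivAt (fun z : ℝ => -z^2/2) (-z) z := by
    have h := ((hasDerivAt_pow 2 z).neg.div_const 2)
    refine h.congr_deriv ?_
    simp
    ring
  have h1 := h0.exp
  have h2 := P.hasDerivAt z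
  have := h1.mul h2
  refine this.congr_deriv ?_
  simp [Polynomial.eval_sub, Polynomial.eval_mul]
  ring

lemma ibp (P : Polynomial ℝ) :
    ∫ z : ℝ, Real.exp (-z^2/2) * (X * P).eval z
      = ∫ z : ℝ, Real.exp (-z^2/2) * (derivative P).eval z := by
  have h0 : (∫ z : ℝ, Real.exp (-z^2/2) * ((derivative P - X * P).eval z)) = 0 :=
    integral_eq_zero_of_hasDerivAt_of_integrable (hasDerivAt_gauss_poly P)
      (integrable_poly_gauss _) (integrable_poly_gauss P)
  simp_rw [Polynomial.eval_sub, mul_sub] at h0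
  rw [integral_sub (integrable_poly_gauss _) (integrable_poly_gauss _)] at h0
  linarith

lemma key (n : ℕ) :
    (∫ z : ℝ, Real.exp (-z^2/2) * (PH (n+2)).eval z)
      = 2 * (n + 1 : ℝ) * ∫ z : ℝ, Real.exp (-z^2/2) * (PH n).eval z := by
  have hrec : PH (n+2) = C 2 * (X * PH (n+1)) - derivative (PH (n+1)) := by
    show C 2 * X * PH (n+1) - derivative (PH (n+1)) = _; ring_nf
  rw [hrec]
  simp_rw [Polynomial.eval_sub, mul_sub]
  rw [integral_sub ?_ (integrable_poly_gauss _)]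
  · have h1 : (∫ z : ℝ, Real.exp (-z^2/2) * (C 2 * (X * PH (n+1))).eval z)
        = 2 * ∫ z : ℝ, Real.exp (-z^2/2) * (X * PH (n+1)).eval z := by
      simp_rw [Polynomial.eval_mul, Polynomial.eval_C]
      rw [← integral_const_mul]
      congr 1; funext z; ring
    rw [h1, ibp (PH (n+1)), PH_derivative n]
    have h2 : (∫ z : ℝ, Real.exp (-z^2/2) * (C (2 * (n+1) : ℝ) * PH n).eval z)
        = 2 * (n + 1 : ℝ) * ∫ z : ℝ, Real.exp (-z^2/2) * (PH n).eval z := by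
      simp_rw [Polynomial.eval_mul, Polynomial.eval_C]
      rw [← integral_const_mul]
      congr 1; funext z; ring
    rw [h2]
    ring
  · have := integrable_poly_gauss (C 2 * (X * PH (n+1)))
    simpa using this

lemma key1 : (∫ z : ℝ, Real.exp (-z^2/2) * (PH 1).eval z) = 0 := by
  have h := ibp (1 : Polynomial ℝ)
  simp only [derivative_one, Polynomial.eval_zero, mul_zero, integral_zero] at h
  have h2 : PH 1 = C 2 * (X * 1) := by
    show C 2 * X * PH 0 - derivative (PH 0) = _
    show C 2 * X * 1 - derivative 1 = _
    simp
  rw [h2]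
  have h3 : (fun z : ℝ => Real.exp (-z^2/2) * (C 2 * (X * 1) : Polynomial ℝ).eval z)
      = fun z : ℝ => 2 * (Real.exp (-z^2/2) * ((X * (1 : Polynomial ℝ)).eval z)) := by
    funext z
    simp [Polynomial.eval_mul]
    ring
  rw [show (∫ z : ℝ, Real.exp (-z^2/2) * (C 2 * (X * 1) : Polynomial ℝ).eval z)
      = ∫ z : ℝ, 2 * (Real.exp (-z^2/2) * ((X * (1 : Polynomial ℝ)).eval z)) from by rw [h3]]
  rw [integral_const_mul, h, mul_zero]

lemma key0 : (∫ z : ℝ, Real.exp (-z^2/2) * (PH 0).eval z) = Real.sqrt (2 * Real.pi) := by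
  have h : (∫ z : ℝ, Real.exp (-(1/2) * z^2)) = Real.sqrt (Real.pi / (1/2)) :=
    integral_gaussian (1/2)
  simp only [PH, Polynomial.eval_one, mul_one]
  rw [show (fun z : ℝ => Real.exp (-z^2/2)) = fun z : ℝ => Real.exp (-(1/2) * z^2) by
    funext z; rw [show -z^2/2 = -(1/2)*z^2 by ring]]
  rw [h]
  norm_num
  rw [mul_comm]

/-- `∫_{-∞}^{∞} e^{-z²/2} H_{2k}(z) dz = 2^{2k+1/2} Γ(k+1/2)` and
`∫_{-∞}^{∞} e^{-z²/2} H_{2k+1}(z) dz = 0`. -/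
theorem hermite_gaussian_integrals (k : ℕ) :
    (∫ z : ℝ, Real.exp (-z^2/2) * physHermite (2*k) z)
        = (2 : ℝ) ^ ((2*(k:ℝ)) + 1/2) * Real.Gamma ((k : ℝ) + 1/2) ∧
    (∫ z : ℝ, Real.exp (-z^2/2) * physHermite (2*k+1) z) = 0 := by
  induction k with
  | zero =>
    constructor
    · simp_rw [physHermite_eval]
      rw [show 2*0 = 0 from rfl, key0]
      rw [Real.sqrt_mul (by norm_num : (0:ℝ) ≤ 2), Real.sqrt_eq_rpow 2]
      norm_num [Real.Gamma_one_half_eq]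
    · simp_rw [physHermite_eval]
      rw [show 2*0+1 = 1 from rfl]
      exact key1
  | succ k ih =>
    obtain ⟨ih1, ih2⟩ := ih
    simp_rw [physHermite_eval] at ih1 ih2 ⊢
    constructor
    · rw [show 2*(k+1) = (2*k) + 2 by ring, key (2*k), ih1]
      have hΓ : Real.Gamma ((k:ℝ) + 1 + 1/2) = ((k:ℝ)+1/2) * Real.Gamma ((k:ℝ)+1/2) := by
        rw [show (k:ℝ)+1+1/2 = ((k:ℝ)+1/2)+1 by ring, Real.Gamma_add_one (by positivity)]
      have hp : (2:ℝ) ^ ((2*((k:ℝ)+1)) + 1/2) = (2:ℝ)^((2*(k:ℝ))+1/2) * 4 := by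
        rw [show (2*((k:ℝ)+1))+1/2 = ((2*(k:ℝ))+1/2) + 2 by ring,
          Real.rpow_add (by norm_num) _ 2]
        norm_num
      push_cast
      rw [hΓ, hp]
      ring
    · rw [show 2*(k+1)+1 = (2*k+1) + 2 by ring, key (2*k+1), ih2, mul_zero]
end

section
/- For λ_1, ..., λ_N real numbers, the fourth power of the Vandermonde product satisfies Π_{1≤j<k≤N} (λ_j - λ_k)^4 = the determinant of the 2N×2N matrix whose rows come in pairs indexed by j = 1,...,N: row 2j-1 has entries λ_j^{k-1} for k = 1,...,2N, and row 2j has entries (k-1)λ_j^{k-2} for k = 1,...,2N. -/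
namespace ConfluentVdm

open Finset Polynomial Matrix

/-- Product over ordered pairs equals nested product over `Ioi`. -/
lemma prod_pairs_eq {M : Type*} [CommMonoid M] {n : ℕ} (f : Fin n × Fin n → M) :
    ∏ p ∈ Finset.univ.filter (fun p : Fin n × Fin n => p.1 < p.2), f p
      = ∏ i : Fin n, ∏ j ∈ Finset.Ioi i, f (i, j) := by
  rw [Finset.prod_filter, ← Finset.univ_product_univ, Finset.prod_product]
  refine Finset.prod_congr rfl fun i _ => ?_
  have h : Finset.Ioi i = Finset.univ.filter (fun j => i < j) := by
    ext j; simp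
  rw [h, Finset.prod_filter]

/-- The divided-difference polynomial: `X * dpoly l c = (C l + X)^c - (C l)^c`. -/
noncomputable def dpoly (l : ℝ) (c : ℕ) : ℝ[X] :=
  ∑ k ∈ Finset.range c, (c.choose (k + 1) : ℝ[X]) * C l ^ (c - 1 - k) * X ^ k

lemma dpoly_key (l : ℝ) (c : ℕ) : (C l + X) ^ c = C l ^ c + X * dpoly l c := by
  rw [add_pow, Finset.sum_range_succ, Nat.sub_self, pow_zero, Nat.choose_self,
    Nat.cast_one, mul_one, mul_one, add_comm]
  congr 1
  unfold dpoly
  rw [Finset.mul_sum, ← Finset.sum_range_reflect]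
  refine Finset.sum_congr rfl fun k hk => ?_
  rw [Finset.mem_range] at hk
  have h1 : c - (c - 1 - k) = k + 1 := by omega
  have h2 : c.choose (c - 1 - k) = c.choose (k + 1) := by
    rw [← Nat.choose_symm (by omega : k + 1 ≤ c)]
    congr 1; omega
  rw [h1, h2]
  ring

lemma dpoly_eval (l : ℝ) (c : ℕ) : (dpoly l c).eval 0 = (c : ℝ) * l ^ (c - 1) := by
  unfold dpoly
  rcases Nat.eq_zero_or_pos c with h | h
  · subst h; simp
  · rw [eval_finset_sum, Finset.sum_eq_single 0]
    · simp [Nat.choose_one_right]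
    · intro k _ hk0
      simp [zero_pow hk0]
    · intro h0
      exact absurd (Finset.mem_range.mpr h) h0

variable {N : ℕ} (lam : Fin N → ℝ)

/-- The perturbed nodes: even indices carry `λ_{i/2}`, odd ones `λ_{i/2} + X`. -/
noncomputable def mu (i : Fin (2 * N)) : ℝ[X] :=
  C (lam ⟨i.val / 2, Nat.div_lt_of_lt_mul i.isLt⟩) + ((i.val % 2 : ℕ) : ℝ[X]) * X

/-- The confluent matrix over `ℝ[X]` (with divided differences in odd rows). -/
noncomputable def Mconf : Matrix (Fin (2 * N)) (Fin (2 * N)) ℝ[X] :=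
  Matrix.of fun i c =>
    if i.val % 2 = 0 then C (lam ⟨i.val / 2, Nat.div_lt_of_lt_mul i.isLt⟩) ^ c.val
    else dpoly (lam ⟨i.val / 2, Nat.div_lt_of_lt_mul i.isLt⟩) c.val

/-- Intermediate matrices after `m` row operations. -/
noncomputable def A (m : ℕ) : Matrix (Fin (2 * N)) (Fin (2 * N)) ℝ[X] :=
  Matrix.of fun i c =>
    if i.val % 2 = 1 ∧ i.val / 2 < m then
      X * dpoly (lam ⟨i.val / 2, Nat.div_lt_of_lt_mul i.isLt⟩) c.val
    else mu lam i ^ c.val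

lemma A_zero : A lam 0 = Matrix.vandermonde (mu lam) := by
  refine Matrix.ext fun i c => ?_
  simp [A, Matrix.vandermonde]

lemma A_succ (m : ℕ) (hm : m < N) :
    A lam (m + 1) =
      Matrix.updateRow (A lam m) ⟨2 * m + 1, by omega⟩
        ((A lam m) ⟨2 * m + 1, by omega⟩ +
          (-1 : ℝ[X]) • (A lam m) ⟨2 * m, by omega⟩) := by
  refine Matrix.ext fun i c => ?_
  by_cases hi : i = (⟨2 * m + 1, by omega⟩ : Fin (2 * N))
  · subst hi
    rw [Matrix.updateRow_self]
    simp only [A, Matrix.of_apply, Pi.add_apply, Pi.smul_apply]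
    rw [if_pos (by constructor <;> omega), if_neg (by omega), if_neg (by omega)]
    have e1 : (2 * m + 1) % 2 = 1 := by omega
    have e2 : (2 * m + 1) / 2 = m := by omega
    have e3 : (2 * m) % 2 = 0 := by omega
    have e4 : (2 * m) / 2 = m := by omega
    simp only [mu, e1, e2, e3, e4, Nat.cast_one, Nat.cast_zero, one_mul, zero_mul, add_zero]
    rw [dpoly_key, smul_eq_mul]
    ring
  · rw [Matrix.updateRow_ne hi]
    have hv : i.val ≠ 2 * m + 1 := fun h => hi (Fin.ext h)
    simp only [A, Matrix.of_apply]
    by_cases hc : i.val % 2 = 1 ∧ i.val / 2 < m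
    · rw [if_pos (by omega), if_pos hc]
    · rw [if_neg (by omega), if_neg hc]

lemma det_A (m : ℕ) (hm : m ≤ N) :
    (A lam m).det = (Matrix.vandermonde (mu lam)).det := by
  induction m with
  | zero => rw [A_zero]
  | succ m ih =>
    have hmN : m < N := by omega
    rw [A_succ lam m hmN,
      Matrix.det_updateRow_add_smul_self _ (by simp [Fin.ext_iff]) (-1 : ℝ[X]),
      ih (by omega)]

lemma A_N : A lam N =
    Matrix.of fun i c => (if i.val % 2 = 0 then (1 : ℝ[X]) else X) * Mconf lam i c := by
  refine Matrix.ext fun i c => ?_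
  simp only [A, Mconf, Matrix.of_apply]
  by_cases h : i.val % 2 = 0
  · have h1 : ¬ (i.val % 2 = 1 ∧ i.val / 2 < N) := by omega
    rw [if_neg h1, if_pos h, if_pos h, one_mul]
    simp [mu, h]
  · have h1 : i.val % 2 = 1 := by omega
    have h2 : i.val / 2 < N := by have := i.isLt; omega
    rw [if_pos ⟨h1, h2⟩, if_neg h, if_neg h]

lemma prod_ite_X :
    (∏ i : Fin (2 * N), (if i.val % 2 = 0 then (1 : ℝ[X]) else X)) = X ^ N := by
  rw [Fin.prod_univ_eq_prod_range (fun i => if i % 2 = 0 then (1 : ℝ[X]) else X) (2 * N)]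
  induction N with
  | zero => simp
  | succ n ih =>
    rw [show 2 * (n + 1) = 2 * n + 1 + 1 by ring, Finset.prod_range_succ,
      Finset.prod_range_succ, ih, if_pos (by omega), if_neg (by omega)]
    ring

lemma det_vdm_eq :
    (Matrix.vandermonde (mu lam)).det = X ^ N * (Mconf lam).det := by
  rw [← det_A lam N le_rfl, A_N, Matrix.det_mul_column, prod_ite_X]

lemma same_part :
    ∏ p ∈ (Finset.univ.filter
        (fun p : Fin (2 * N) × Fin (2 * N) => p.1 < p.2)).filter
        (fun p => p.1.val / 2 = p.2.val / 2),
      (mu lam p.2 - mu lam p.1) = X ^ N := by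
  rw [show (X ^ N : ℝ[X]) = ∏ _a : Fin N, X by
    rw [Finset.prod_const, Finset.card_univ, Fintype.card_fin]]
  refine Finset.prod_nbij' (fun p => ⟨p.1.val / 2, Nat.div_lt_of_lt_mul p.1.isLt⟩)
    (fun a => (⟨2 * a.val, by have := a.isLt; omega⟩, ⟨2 * a.val + 1, by have := a.isLt; omega⟩))
    (fun p _ => Finset.mem_univ _) ?_ ?_ ?_ ?_
  · intro a _
    simp only [Finset.mem_filter, Finset.mem_univ, true_and]
    constructor
    · exact Fin.mk_lt_mk.mpr (by omega)
    · show 2 * a.val / 2 = (2 * a.val + 1) / 2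
      omega
  · intro p hp
    simp only [Finset.mem_filter, Finset.mem_univ, true_and] at hp
    obtain ⟨hlt, heq⟩ := hp
    have hlt' : p.1.val < p.2.val := hlt
    have h1 : 2 * (p.1.val / 2) = p.1.val := by omega
    have h2 : 2 * (p.1.val / 2) + 1 = p.2.val := by omega
    exact Prod.ext (Fin.ext h1) (Fin.ext h2)
  · intro a _
    refine Fin.ext ?_
    show 2 * a.val / 2 = a.val
    omega
  · intro p hp
    simp only [Finset.mem_filter, Finset.mem_univ, true_and] at hp
    obtain ⟨hlt, heq⟩ := hp
    have hlt' : p.1.val < p.2.val := hlt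
    have h1 : p.1.val % 2 = 0 := by omega
    have h2 : p.2.val % 2 = 1 := by omega
    have hmk : (⟨p.2.val / 2, Nat.div_lt_of_lt_mul p.2.isLt⟩ : Fin N)
        = ⟨p.1.val / 2, Nat.div_lt_of_lt_mul p.1.isLt⟩ := Fin.ext heq.symm
    simp only [mu, h1, h2, hmk, Nat.cast_one, Nat.cast_zero, one_mul, zero_mul, add_zero]
    ring

lemma det_Mconf_eq :
    (Mconf lam).det = ∏ p ∈ (Finset.univ.filter
        (fun p : Fin (2 * N) × Fin (2 * N) => p.1 < p.2)).filter
        (fun p => ¬ p.1.val / 2 = p.2.val / 2),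
      (mu lam p.2 - mu lam p.1) := by
  have hX : (X : ℝ[X]) ^ N ≠ 0 := pow_ne_zero _ X_ne_zero
  refine mul_left_cancel₀ hX ?_
  rw [← det_vdm_eq, Matrix.det_vandermonde, ← prod_pairs_eq (fun p => mu lam p.2 - mu lam p.1),
    ← Finset.prod_filter_mul_prod_filter_not _ (fun p => p.1.val / 2 = p.2.val / 2),
    same_part]

lemma cross_eval :
    ∏ p ∈ (Finset.univ.filter
        (fun p : Fin (2 * N) × Fin (2 * N) => p.1 < p.2)).filter
        (fun p => ¬ p.1.val / 2 = p.2.val / 2),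
      (lam ⟨p.2.val / 2, Nat.div_lt_of_lt_mul p.2.isLt⟩
        - lam ⟨p.1.val / 2, Nat.div_lt_of_lt_mul p.1.isLt⟩)
      = ∏ p ∈ Finset.univ.filter (fun p : Fin N × Fin N => p.1 < p.2),
          (lam p.1 - lam p.2) ^ 4 := by
  have h2 : ∏ q ∈ (Finset.univ.filter (fun p : Fin N × Fin N => p.1 < p.2))
        ×ˢ (Finset.univ : Finset (Fin 2 × Fin 2)), (lam q.1.2 - lam q.1.1)
      = ∏ p ∈ Finset.univ.filter (fun p : Fin N × Fin N => p.1 < p.2),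
          (lam p.1 - lam p.2) ^ 4 := by
    rw [Finset.prod_product]
    refine Finset.prod_congr rfl fun p _ => ?_
    dsimp only
    rw [Finset.prod_const, Finset.card_univ]
    have hcard : Fintype.card (Fin 2 × Fin 2) = 4 := by simp
    rw [hcard]
    ring
  rw [← h2]
  refine Finset.prod_nbij'
    (fun p => ((⟨p.1.val / 2, Nat.div_lt_of_lt_mul p.1.isLt⟩,
                ⟨p.2.val / 2, Nat.div_lt_of_lt_mul p.2.isLt⟩),
               (⟨p.1.val % 2, by omega⟩, ⟨p.2.val % 2, by omega⟩)))
    (fun q => (⟨2 * q.1.1.val + q.2.1.val, by have := q.1.1.isLt; have := q.2.1.isLt; omega⟩,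
               ⟨2 * q.1.2.val + q.2.2.val, by have := q.1.2.isLt; have := q.2.2.isLt; omega⟩))
    ?_ ?_ ?_ ?_ ?_
  · intro p hp
    simp only [Finset.mem_filter, Finset.mem_univ, true_and] at hp
    obtain ⟨hlt, hne⟩ := hp
    have hlt' : p.1.val < p.2.val := hlt
    simp only [Finset.mem_product, Finset.mem_filter, Finset.mem_univ, true_and]
    exact ⟨Fin.mk_lt_mk.mpr (by omega), trivial⟩
  · intro q hq
    simp only [Finset.mem_product, Finset.mem_filter, Finset.mem_univ, true_and] at hq
    have hlt : q.1.1.val < q.1.2.val := hq.1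
    have h1 := q.2.1.isLt
    have h2 := q.2.2.isLt
    simp only [Finset.mem_filter, Finset.mem_univ, true_and]
    constructor
    · exact Fin.mk_lt_mk.mpr (by omega)
    · show ¬ (2 * q.1.1.val + q.2.1.val) / 2 = (2 * q.1.2.val + q.2.2.val) / 2
      omega
  · intro p hp
    simp only [Finset.mem_filter, Finset.mem_univ, true_and] at hp
    refine Prod.ext (Fin.ext ?_) (Fin.ext ?_)
    · show 2 * (p.1.val / 2) + p.1.val % 2 = p.1.val
      omega
    · show 2 * (p.2.val / 2) + p.2.val % 2 = p.2.val
      omega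
  · intro q hq
    have h1 := q.2.1.isLt
    have h2 := q.2.2.isLt
    refine Prod.ext (Prod.ext (Fin.ext ?_) (Fin.ext ?_)) (Prod.ext (Fin.ext ?_) (Fin.ext ?_))
    · show (2 * q.1.1.val + q.2.1.val) / 2 = q.1.1.val
      omega
    · show (2 * q.1.2.val + q.2.2.val) / 2 = q.1.2.val
      omega
    · show ((2 * q.1.1.val + q.2.1.val) % 2 : ℕ) = q.2.1.val
      omega
    · show ((2 * q.1.2.val + q.2.2.val) % 2 : ℕ) = q.2.2.val
      omega
  · intro p _
    rfl

end ConfluentVdm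

/-- The fourth power of the Vandermonde product equals the confluent Vandermonde
determinant: the determinant of the `2N × 2N` matrix whose rows come in pairs, the
`(2j-1)`-st row being `(1, λ_j, λ_j², …, λ_j^{2N-1})` and the `2j`-th row its derivative
`(0, 1, 2λ_j, …, (2N-1)λ_j^{2N-2})`. -/
theorem vandermonde_pow_four_eq_confluent_det (N : ℕ) (lam : Fin N → ℝ) :
    (∏ p ∈ Finset.univ.filter (fun p : Fin N × Fin N => p.1 < p.2),
        (lam p.1 - lam p.2)^4)
      = Matrix.det (Matrix.of fun r c : Fin (2*N) =>
          if r.val % 2 = 0 then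
            lam ⟨r.val / 2, by have := r.isLt; omega⟩ ^ c.val
          else
            (c.val : ℝ) * lam ⟨r.val / 2, by have := r.isLt; omega⟩ ^ (c.val - 1)) := by
  classical
  have key := congrArg (Polynomial.eval 0) (ConfluentVdm.det_Mconf_eq lam)
  have hdet : Polynomial.eval 0 (ConfluentVdm.Mconf lam).det
      = Matrix.det (Matrix.of fun r c : Fin (2*N) =>
          if r.val % 2 = 0 then
            lam ⟨r.val / 2, by have := r.isLt; omega⟩ ^ c.val
          else
            (c.val : ℝ) * lam ⟨r.val / 2, by have := r.isLt; omega⟩ ^ (c.val - 1)) := by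
    rw [show (Polynomial.eval 0 : Polynomial ℝ → ℝ) (ConfluentVdm.Mconf lam).det
        = (Polynomial.evalRingHom (0:ℝ)) (ConfluentVdm.Mconf lam).det from rfl,
      RingHom.map_det]
    congr 1
    ext r c
    simp only [RingHom.mapMatrix_apply, Matrix.map_apply, ConfluentVdm.Mconf,
      Matrix.of_apply, Polynomial.coe_evalRingHom]
    by_cases h : r.val % 2 = 0
    · rw [if_pos h, if_pos h]
      simp
    · rw [if_neg h, if_neg h, ConfluentVdm.dpoly_eval]
  have hprod : Polynomial.eval 0 (∏ p ∈ (Finset.univ.filter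
        (fun p : Fin (2*N) × Fin (2*N) => p.1 < p.2)).filter
        (fun p => ¬ p.1.val / 2 = p.2.val / 2),
      (ConfluentVdm.mu lam p.2 - ConfluentVdm.mu lam p.1))
      = ∏ p ∈ (Finset.univ.filter
        (fun p : Fin (2*N) × Fin (2*N) => p.1 < p.2)).filter
        (fun p => ¬ p.1.val / 2 = p.2.val / 2),
      (lam ⟨p.2.val / 2, by have := p.2.isLt; omega⟩
        - lam ⟨p.1.val / 2, by have := p.1.isLt; omega⟩) := by
    rw [show (Polynomial.eval 0 : Polynomial ℝ → ℝ) = (Polynomial.evalRingHom (0:ℝ)) from rfl,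
      map_prod]
    refine Finset.prod_congr rfl fun p _ => ?_
    simp [ConfluentVdm.mu]
  rw [hdet, hprod] at key
  rw [← ConfluentVdm.cross_eval lam, key]
end
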